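/- Let ω, μ ∈ ℝ with sin(ωμ) ≠ 0. Suppose x, v : ℝ → ℝ are such that for every t ∈ ℝ the function x has derivative v(t) at t, and v has derivative -ω²·x(t) at t (i.e., x solves the harmonic oscillator equation ẍ + ω²x = 0 with velocity v = ẋ). Then for every t ∈ ℝ: ω·(x(t + μ) - x(t)·cos(ωμ))/sin(ωμ) = v(t). -/

import Mathlib

/-! The quantity `ω x(s) cos(ω(T - s)) + v(s) sin(ω(T - s))` is constant along a solution of
`ẍ + ω²x = 0`; comparing its values at `s = t` and `s = T = t + μ` gives the exact one-step formula
`ω x(t + μ) = ω x(t) cos(ωμ) + ẋ(t) sin(ωμ)`, which is the claim after dividing by `sin(ωμ)`. -/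

open Real

section HarmonicOscillator

variable {ω : ℝ} {x v : ℝ → ℝ}

theorem hasDerivAt_harmonic_invariant (hx : ∀ t, HasDerivAt x (v t) t)
    (hv : ∀ t, HasDerivAt v (-(ω ^ 2) * x t) t) (T s : ℝ) :
    HasDerivAt (fun s => ω * x s * cos (ω * (T - s)) + v s * sin (ω * (T - s))) 0 s := by
  have hphase : HasDerivAt (fun s => ω * (T - s)) (-ω) s := by
    simpa using ((hasDerivAt_id s).const_sub T).const_mul ω
  refine ((((hx s).const_mul ω).mul ((hasDerivAt_cos _).comp s hphase)).add
    ((hv s).mul ((hasDerivAt_sin _).comp s hphase))).congr_deriv ?_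
  simp only [Function.comp_apply]
  ring

theorem harmonic_shift (hx : ∀ t, HasDerivAt x (v t) t)
    (hv : ∀ t, HasDerivAt v (-(ω ^ 2) * x t) t) (t μ : ℝ) :
    ω * x (t + μ) = ω * x t * cos (ω * μ) + v t * sin (ω * μ) := by
  have hconst := is_const_of_deriv_eq_zero
    (fun s => (hasDerivAt_harmonic_invariant hx hv (t + μ) s).differentiableAt)
    (fun s => (hasDerivAt_harmonic_invariant hx hv (t + μ) s).deriv) t (t + μ)
  simp only [sub_self, mul_zero, cos_zero, sin_zero, add_sub_cancel_left] at hconst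
  linarith

end HarmonicOscillator

theorem stmt17 (ω μ : ℝ) (hs : Real.sin (ω * μ) ≠ 0) (x v : ℝ → ℝ)
    (hx : ∀ t, HasDerivAt x (v t) t)
    (hv : ∀ t, HasDerivAt v (-(ω ^ 2) * x t) t) :
    ∀ t : ℝ, ω * (x (t + μ) - x t * Real.cos (ω * μ)) / Real.sin (ω * μ) = v t := by
  intro t
  rw [div_eq_iff hs, mul_sub, harmonic_shift hx hv t μ]
  ring
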